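/- arXiv:1404.1553 — 6 statements merged into one kernel-verified Lean document; each statement's English description precedes it below -/
import Mathlib

section
/- For a simple connected graph G with minimum degree at least 3, the positive support of the square of the Grover matrix satisfies (U²)⁺ = (U⁺)² + I, where U is the Grover matrix on the 2m oriented edges, U⁺ denotes the entrywise positive support (entry 1 if positive, 0 otherwise), and I is the identity matrix of size 2m. -/
/-!
A term `U e f * U f g` of `(U²) e g` can be nonzero only for the dart `f` from the head of `g`
to the tail of `e`, so `(U²) e g` is a single product and is positive exactly when both factors
are positive or both are negative. The first case is counted by `(U⁺)²`. When all degrees are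
at least 3, the negative entries of `U` are exactly those at `(e, e⁻¹)`, so the second case
contributes the square of the permutation matrix of dart reversal, which is `I`.
-/

open Matrix

/-- Entrywise positive support of a real matrix: entry 1 if positive, 0 otherwise. -/
noncomputable def posSupp {m : Type*} (M : Matrix m m ℝ) : Matrix m m ℝ :=
  fun i j => if 0 < M i j then 1 else 0

/-- The Grover matrix of a graph, indexed by oriented edges (darts). -/
noncomputable def grover {V : Type*} [Fintype V] [DecidableEq V] (G : SimpleGraph V)
    [DecidableRel G.Adj] : Matrix G.Dart G.Dart ℝ := fun e f =>
  if f = e.symm then 2 / (G.degree e.toProd.1 : ℝ) - 1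
  else if f.toProd.2 = e.toProd.1 then 2 / (G.degree e.toProd.1 : ℝ)
  else 0

open Finset

theorem ite_pos_mul (a b : ℝ) :
    (if 0 < a * b then 1 else 0 : ℝ) =
      (if 0 < a then 1 else 0) * (if 0 < b then 1 else 0) +
        (if 0 < -a then 1 else 0) * (if 0 < -b then 1 else 0) := by
  rcases lt_trichotomy a 0 with ha | rfl | ha <;> rcases lt_trichotomy b 0 with hb | rfl | hb <;>
    simp [*, lt_asymm, mul_pos_of_neg_of_neg]

theorem ite_pos_sum_of_subsingleton {ι : Type*} [Fintype ι] (x : ι → ℝ)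
    (hx : {j | x j ≠ 0}.Subsingleton) :
    (if 0 < ∑ j, x j then 1 else 0 : ℝ) = ∑ j, if 0 < x j then 1 else 0 := by
  rcases hx.eq_empty_or_singleton with hx | ⟨j₀, hx⟩
  · have hzero : ∀ j, x j = 0 := fun j => by
      simpa using Set.eq_empty_iff_forall_notMem.1 hx j
    simp [hzero]
  · have hzero : ∀ j ≠ j₀, x j = 0 := fun j hj => by
      by_contra h
      exact hj (by simpa using (Set.ext_iff.1 hx j).1 h)
    rw [sum_eq_single j₀ (fun j _ hj => hzero j hj) (by simp),
      sum_eq_single j₀ (fun j _ hj => by simp [hzero j hj]) (by simp)]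

theorem posSupp_mul_apply {n : Type*} [Fintype n] (M N : Matrix n n ℝ) {i k : n}
    (h : {j | M i j * N j k ≠ 0}.Subsingleton) :
    posSupp (M * N) i k = (posSupp M * posSupp N) i k + (posSupp (-M) * posSupp (-N)) i k := by
  simp only [posSupp, mul_apply, Matrix.neg_apply]
  rw [ite_pos_sum_of_subsingleton _ h, ← sum_add_distrib]
  exact sum_congr rfl fun j _ => ite_pos_mul _ _

namespace SimpleGraph

variable {V : Type*} [Fintype V] [DecidableEq V] (G : SimpleGraph V) [DecidableRel G.Adj]

theorem snd_eq_fst_of_grover_ne_zero {e f : G.Dart} (h : grover G e f ≠ 0) : f.snd = e.fst := by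
  unfold grover at h
  split_ifs at h with h₁ h₂
  · simp [h₁]
  · exact h₂
  · exact absurd rfl h

theorem grover_mul_grover_support_subsingleton (e g : G.Dart) :
    {f | grover G e f * grover G f g ≠ 0}.Subsingleton := by
  intro f hf f' hf'
  simp only [Set.mem_ofPred_eq, mul_ne_zero_iff] at hf hf'
  exact Dart.ext _ _ <| Prod.ext
    ((snd_eq_fst_of_grover_ne_zero G hf.2).symm.trans (snd_eq_fst_of_grover_ne_zero G hf'.2))
    ((snd_eq_fst_of_grover_ne_zero G hf.1).trans (snd_eq_fst_of_grover_ne_zero G hf'.1).symm)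

theorem posSupp_neg_grover (hdeg : 2 < G.minDegree) :
    posSupp (-grover G) = (Dart.symm_involutive.toPerm _).permMatrix ℝ := by
  ext e f
  have hd : (2 : ℝ) < G.degree e.fst := by
    exact_mod_cast hdeg.trans_le (G.minDegree_le_degree _)
  have hlt : 2 / (G.degree e.fst : ℝ) < 1 := (div_lt_one (by linarith)).2 hd
  have hnn : 0 ≤ 2 / (G.degree e.fst : ℝ) := by positivity
  simp only [posSupp, Matrix.neg_apply, grover, Equiv.Perm.permMatrix, PEquiv.toMatrix_apply,
    Equiv.toPEquiv_apply, Option.mem_def, Option.some.injEq, Function.Involutive.coe_toPerm]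
  by_cases h : f = e.symm
  · simp [h, hlt]
  · simpa [h, Ne.symm h] using ite_nonneg hnn le_rfl

theorem posSupp_neg_grover_sq (hdeg : 2 < G.minDegree) : posSupp (-grover G) ^ 2 = 1 := by
  rw [posSupp_neg_grover G hdeg, sq, ← permMatrix_mul,
    show Dart.symm_involutive.toPerm _ * Dart.symm_involutive.toPerm _ = 1 from
      Equiv.ext Dart.symm_symm, permMatrix_one]

end SimpleGraph

theorem grover_sq_posSupp_general {V : Type*} [Fintype V] [DecidableEq V] (G : SimpleGraph V)
    [DecidableRel G.Adj] (hdeg : 3 ≤ G.minDegree) :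
    posSupp ((grover G) ^ 2) = (posSupp (grover G)) ^ 2 + 1 := by
  ext e g
  rw [sq, posSupp_mul_apply _ _ (G.grover_mul_grover_support_subsingleton e g), ← sq, ← sq,
    G.posSupp_neg_grover_sq hdeg, Matrix.add_apply]

/-- For a simple connected graph `G` with minimum degree at least 3,
`(U²)⁺ = (U⁺)² + I`. -/
theorem grover_sq_posSupp {V : Type*} [Fintype V] [DecidableEq V] (G : SimpleGraph V)
    [DecidableRel G.Adj] (hconn : G.Connected) (hdeg : 3 ≤ G.minDegree) :
    posSupp ((grover G) ^ 2) = (posSupp (grover G)) ^ 2 + 1 :=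
  grover_sq_posSupp_general G hdeg
end

section
/- For a finite simple connected graph G, the entry of the transpose of (U²)⁺ at position (e,f) equals 1 if and only if (e,f) is a 2-step-arc or a 2-step-identity, where a 2-step-arc (e,f) means there exists an oriented edge g with g ≠ e⁻¹, g ≠ f⁻¹, o(g) = t(e), and t(g) = o(f), and a 2-step-identity means e = f. -/
open Matrix

/-- `(e,f)` is a 2-step-arc: there is an oriented edge `g` with `g ≠ e⁻¹`, `g ≠ f⁻¹`,
`o(g) = t(e)` and `t(g) = o(f)`. -/
def IsTwoStepArc {V : Type*} (G : SimpleGraph V) (e f : G.Dart) : Prop :=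
  ∃ g : G.Dart, g ≠ e.symm ∧ g ≠ f.symm ∧ g.toProd.1 = e.toProd.2 ∧ g.toProd.2 = f.toProd.1

/-!
The entry `(U²)_{f,e} = ∑_g U_{f,g} U_{g,e}` has at most one nonzero term: `U_{f,g} U_{g,e} ≠ 0`
forces `g` to be the dart `t(e) → o(f)`, and a dart is determined by its endpoints. As all degrees
exceed 2, the backtracking entries `U_{x,x⁻¹} = 2/d - 1` are negative and the other nonzero entries
`2/d` are positive, so this term is positive iff `g` backtracks on both `e` and `f` (then `e = f`)
or on neither (then `(e,f)` is a 2-step-arc).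
-/

theorem posSupp_apply_eq_one_iff {m : Type*} (M : Matrix m m ℝ) (i j : m) :
    posSupp M i j = 1 ↔ 0 < M i j := by
  unfold posSupp
  split_ifs with h <;> simp [h]

section TwoStepArc

variable {V : Type*} {G : SimpleGraph V} {e f g : G.Dart}

theorem isTwoStepArc_iff (hg : g.toProd = (e.snd, f.fst)) :
    IsTwoStepArc G e f ↔ g ≠ e.symm ∧ g ≠ f.symm := by
  constructor
  · rintro ⟨g', hge, hgf, hfst, hsnd⟩
    obtain rfl : g' = g := SimpleGraph.Dart.ext _ _ (hg ▸ Prod.ext hfst hsnd)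
    exact ⟨hge, hgf⟩
  · rintro ⟨hge, hgf⟩
    exact ⟨g, hge, hgf, congrArg Prod.fst hg, congrArg Prod.snd hg⟩

theorem isTwoStepArc_or_eq_iff (hg : g.toProd = (e.snd, f.fst)) :
    IsTwoStepArc G e f ∨ e = f ↔ (g = e.symm ↔ g = f.symm) := by
  have hsymm : g = e.symm → g = f.symm → e = f := fun he hf =>
    SimpleGraph.Dart.symm_involutive.injective (he.symm.trans hf)
  rw [isTwoStepArc_iff hg]
  constructor
  · rintro (h | rfl) <;> tauto
  · tauto

theorem not_isTwoStepArc_or_eq (h : ∀ g : G.Dart, g.toProd ≠ (e.snd, f.fst)) :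
    ¬(IsTwoStepArc G e f ∨ e = f) := by
  rintro (⟨g, -, -, hfst, hsnd⟩ | rfl)
  · exact h g (Prod.ext hfst hsnd)
  · exact h e.symm rfl

end TwoStepArc

section Grover

variable {V : Type*} [Fintype V] [DecidableEq V] {G : SimpleGraph V} [DecidableRel G.Adj]

theorem grover_apply_symm (e : G.Dart) : grover G e e.symm = 2 / (G.degree e.fst : ℝ) - 1 :=
  if_pos rfl

theorem grover_apply_of_ne_symm {e f : G.Dart} (hf : f.snd = e.fst) (hne : f ≠ e.symm) :
    grover G e f = 2 / (G.degree e.fst : ℝ) := by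
  rw [grover, if_neg hne, if_pos hf]

theorem grover_apply_eq_zero_of_snd_ne {e f : G.Dart} (hf : f.snd ≠ e.fst) : grover G e f = 0 := by
  have hne : f ≠ e.symm := by rintro rfl; exact hf rfl
  rw [grover, if_neg hne, if_neg hf]

theorem grover_apply_neg_iff {e f : G.Dart} (hdeg : 2 < G.degree e.fst) (hf : f.snd = e.fst) :
    grover G e f < 0 ↔ f = e.symm := by
  by_cases hne : f = e.symm
  · have hd : (2 : ℝ) < G.degree e.fst := by exact_mod_cast hdeg
    rw [hne, grover_apply_symm, sub_neg, div_lt_one (by linarith)]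
    simpa using hd
  · rw [grover_apply_of_ne_symm hf hne, iff_false_intro hne, iff_false, not_lt]
    positivity

theorem grover_apply_pos_iff {e f : G.Dart} (hdeg : 2 < G.degree e.fst) (hf : f.snd = e.fst) :
    0 < grover G e f ↔ f ≠ e.symm := by
  by_cases hne : f = e.symm
  · subst hne
    simp only [ne_eq, not_true_eq_false, iff_false, not_lt]
    exact ((grover_apply_neg_iff hdeg hf).mpr rfl).le
  · simp only [grover_apply_of_ne_symm hf hne, ne_eq, hne, not_false_eq_true, iff_true]
    exact div_pos two_pos (by exact_mod_cast Nat.zero_lt_two.trans hdeg)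

theorem grover_mul_grover_eq_zero {e f g : G.Dart} (hg : g.toProd ≠ (e.snd, f.fst)) :
    grover G f g * grover G g e = 0 := by
  by_cases hgf : g.snd = f.fst
  · have hge : e.snd ≠ g.fst := fun h => hg (Prod.ext h.symm hgf)
    rw [grover_apply_eq_zero_of_snd_ne hge, mul_zero]
  · rw [grover_apply_eq_zero_of_snd_ne hgf, zero_mul]

theorem grover_sq_apply_eq_of_toProd_eq {e f g : G.Dart} (hg : g.toProd = (e.snd, f.fst)) :
    (grover G ^ 2) f e = grover G f g * grover G g e := by
  rw [sq, mul_apply]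
  refine Finset.sum_eq_single g (fun g' _ hg' => grover_mul_grover_eq_zero ?_) (by simp)
  rw [← hg]
  exact fun h => hg' (SimpleGraph.Dart.ext _ _ h)

theorem grover_sq_apply_eq_zero {e f : G.Dart} (h : ∀ g : G.Dart, g.toProd ≠ (e.snd, f.fst)) :
    (grover G ^ 2) f e = 0 := by
  rw [sq, mul_apply]
  exact Finset.sum_eq_zero fun g _ => grover_mul_grover_eq_zero (h g)

theorem grover_mul_grover_pos_iff (hdeg : 2 < G.minDegree) {e f g : G.Dart}
    (hg : g.toProd = (e.snd, f.fst)) :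
    0 < grover G f g * grover G g e ↔ (g = e.symm ↔ g = f.symm) := by
  have hdeg' : ∀ v, 2 < G.degree v := fun v => hdeg.trans_le (G.minDegree_le_degree v)
  have hgf : g.snd = f.fst := congrArg Prod.snd hg
  have hge : e.snd = g.fst := (congrArg Prod.fst hg).symm
  have hsymm : e = g.symm ↔ g = e.symm := eq_comm.trans SimpleGraph.Dart.symm_involutive.eq_iff
  rw [mul_pos_iff, grover_apply_pos_iff (hdeg' _) hgf, grover_apply_pos_iff (hdeg' _) hge,
    grover_apply_neg_iff (hdeg' _) hgf, grover_apply_neg_iff (hdeg' _) hge, hsymm]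
  tauto

end Grover

theorem transpose_posSupp_grover_sq_entry_general {V : Type*} [Fintype V] [DecidableEq V]
    (G : SimpleGraph V) [DecidableRel G.Adj] (hdeg : 3 ≤ G.minDegree)
    (e f : G.Dart) :
    (posSupp ((grover G) ^ 2))ᵀ e f = 1 ↔ IsTwoStepArc G e f ∨ e = f := by
  rw [transpose_apply, posSupp_apply_eq_one_iff]
  by_cases h : ∃ g : G.Dart, g.toProd = (e.snd, f.fst)
  · obtain ⟨g, hg⟩ := h
    rw [grover_sq_apply_eq_of_toProd_eq hg, grover_mul_grover_pos_iff hdeg hg,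
      isTwoStepArc_or_eq_iff hg]
  · push Not at h
    simpa [grover_sq_apply_eq_zero h] using not_isTwoStepArc_or_eq h

/-- the `(e,f)` entry of the transpose of `(U²)⁺` equals 1 iff `(e,f)` is a
2-step-arc or a 2-step-identity. -/
theorem transpose_posSupp_grover_sq_entry {V : Type*} [Fintype V] [DecidableEq V]
    (G : SimpleGraph V) [DecidableRel G.Adj] (hconn : G.Connected) (hdeg : 3 ≤ G.minDegree)
    (e f : G.Dart) :
    (posSupp ((grover G) ^ 2))ᵀ e f = 1 ↔ IsTwoStepArc G e f ∨ e = f :=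
  transpose_posSupp_grover_sq_entry_general G hdeg e f
end

section
/- Let G be a simple connected k-regular graph with k ≥ 3 and adjacency matrix A. If λ is an eigenvalue of A, then the complex numbers μ = (λ² − 2k + 4)/2 ± i·λ·√(k − 1 − λ²/4) are eigenvalues of the positive support (U²)⁺ of the square of the Grover matrix. Moreover, the remaining 2(m − n) eigenvalues of (U²)⁺ all equal 2. -/
open Matrix Polynomial

/-- The eigenvalue `μ = (λ² − 2k + 4)/2 ± i λ √(k − 1 − λ²/4)` (sign `s`),
square roots of negative reals being interpreted in `ℂ`. -/
noncomputable def muEig (k : ℕ) (lam : ℂ) (s : ℝ) : ℂ :=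
  (lam ^ 2 - 2 * k + 4) / 2 + s * Complex.I * lam * ((k : ℂ) - 1 - lam ^ 2 / 4) ^ ((1 : ℂ) / 2)

/-!
When every degree is at least `3`, the Grover weights satisfy `2 / deg - 1 < 0 < 2 / deg`, so an
entry of `U²` is positive exactly when the two-step walk it records backtracks at both steps (the
diagonal) or at neither, and `(U²)⁺ = B² + 1` for the non-backtracking matrix `B`. Writing
`B = S Tᵀ - J` with incidence matrices `S`, `T` and the dart reversal `J` (an involution),
`det (1 - X Tᵀ) = det (1 - Tᵀ X)` moves `det (s - B)` to the vertices (Ihara–Bass): for a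
`k`-regular graph, `(s² - 1)ⁿ det (s - B) = det (s + J) det ((s² + k - 1) - s A)`. Multiplying
the cases `s` and `-s` with `s² = x - 1` gives
`det (x - B² - 1) = (x - 2)^(2(m - n)) ∏_λ ((x + k - 2)² - (x - 1) λ²)`,
and the roots of the quadratic factor are `μ±(λ)`.
-/

namespace SimpleGraph

section Darts

variable {V : Type*} {G : SimpleGraph V}

theorem Dart.mk_eq_symm_iff {a : V} (e : G.Dart) (h : G.Adj a e.fst) :
    (⟨(a, e.fst), h⟩ : G.Dart) = e.symm ↔ a = e.snd := by
  simp [Dart.ext_iff, Prod.ext_iff]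

theorem Dart.eq_mk_iff {a : V} (f : G.Dart) (h : G.Adj a f.snd) :
    f = ⟨(a, f.snd), h⟩ ↔ f.fst = a := by
  simp [Dart.ext_iff, Prod.ext_iff]

variable [Fintype V] [DecidableRel G.Adj] [DecidableEq V]

theorem sum_dart_ite_toProd_eq {M : Type*} [AddCommMonoid M] (a b : V) (c : G.Dart → M) :
    ∑ e : G.Dart, (if e.toProd = (a, b) then c e else 0) =
      if h : G.Adj a b then c ⟨(a, b), h⟩ else 0 := by
  split_ifs with h
  · rw [Finset.sum_eq_single ⟨(a, b), h⟩ (fun e _ he => if_neg fun h' => he (Dart.ext _ _ h'))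
      (by simp)]
    simp
  · refine Finset.sum_eq_zero fun e _ => if_neg fun he => h ?_
    simpa [he] using e.adj

theorem sum_dart_snd_eq_degree (R : Type*) [AddCommMonoidWithOne R] (v : V) :
    ∑ e : G.Dart, (if e.snd = v then (1 : R) else 0) = G.degree v := by
  rw [← Equiv.sum_comp (Function.Involutive.toPerm _ Dart.symm_involutive)]
  simp [Finset.sum_boole, dart_fst_fiber_card_eq_degree]

theorem dart_matrix_mul_apply {R : Type*} [NonUnitalNonAssocSemiring R]
    {P Q : Matrix G.Dart G.Dart R} (hP : ∀ e f, P e f ≠ 0 → f.snd = e.fst)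
    (hQ : ∀ e f, Q e f ≠ 0 → f.snd = e.fst) (e f : G.Dart) :
    (P * Q) e f = if h : G.Adj f.snd e.fst then
      P e ⟨(f.snd, e.fst), h⟩ * Q ⟨(f.snd, e.fst), h⟩ f else 0 := by
  rw [Matrix.mul_apply, ← sum_dart_ite_toProd_eq _ _ fun g => P e g * Q g f]
  refine Finset.sum_congr rfl fun g _ => ?_
  split_ifs with hg
  · rfl
  · by_contra hne
    exact hg (Prod.ext (hQ g f (right_ne_zero_of_mul hne)).symm
      (hP e g (left_ne_zero_of_mul hne)))

end Darts

variable {V : Type*} (G : SimpleGraph V)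

theorem map_adjMatrix [DecidableRel G.Adj] {R S : Type*} [NonAssocSemiring R] [NonAssocSemiring S]
    (f : R →+* S) : (G.adjMatrix R).map f = G.adjMatrix S := by
  ext v w
  simp [adjMatrix_apply, apply_ite f]

variable [DecidableEq V]

/-- The non-backtracking (Hashimoto) matrix, in the orientation where entry `e f` is `1` when the
dart `e` may follow the dart `f`. -/
def nonBacktracking (R : Type*) [Zero R] [One R] : Matrix G.Dart G.Dart R :=
  Matrix.of fun e f => if f.snd = e.fst ∧ f ≠ e.symm then 1 else 0

def dartFstMatrix (R : Type*) [Zero R] [One R] : Matrix G.Dart V R :=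
  Matrix.of fun e v => if e.fst = v then 1 else 0

def dartSndMatrix (R : Type*) [Zero R] [One R] : Matrix G.Dart V R :=
  Matrix.of fun e v => if e.snd = v then 1 else 0

def dartSymmMatrix (R : Type*) [Zero R] [One R] : Matrix G.Dart G.Dart R :=
  Matrix.of fun e f => if f = e.symm then 1 else 0

theorem map_nonBacktracking {R S : Type*} [NonAssocSemiring R] [NonAssocSemiring S]
    (f : R →+* S) : (nonBacktracking G R).map f = nonBacktracking G S := by
  ext e e'
  simp [nonBacktracking, apply_ite f]

theorem nonBacktracking_eq_sub [Fintype V] (R : Type*) [NonAssocRing R] :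
    nonBacktracking G R = dartFstMatrix G R * (dartSndMatrix G R)ᵀ - dartSymmMatrix G R := by
  ext e f
  by_cases h : f = e.symm
  · simp [nonBacktracking, dartFstMatrix, dartSndMatrix, dartSymmMatrix, Matrix.mul_apply, h]
  · simp [nonBacktracking, dartFstMatrix, dartSndMatrix, dartSymmMatrix, Matrix.mul_apply, h,
      eq_comm]

variable [Fintype V] [DecidableRel G.Adj]

theorem nonBacktracking_sq_apply (R : Type*) [Semiring R] (e f : G.Dart) :
    (nonBacktracking G R ^ 2) e f =
      if G.Adj f.snd e.fst ∧ f.snd ≠ e.snd ∧ f.fst ≠ e.fst then 1 else 0 := by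
  have hsupp : ∀ e f, nonBacktracking G R e f ≠ 0 → f.snd = e.fst := fun e f hef => by
    by_contra h
    exact hef (by simp [nonBacktracking, h])
  rw [sq, dart_matrix_mul_apply hsupp hsupp]
  by_cases h : G.Adj f.snd e.fst
  · simp [h, nonBacktracking, Dart.mk_eq_symm_iff, Dart.eq_mk_iff]
    split_ifs <;> tauto
  · simp [h]

section IharaBass

variable (R : Type*) [NonAssocSemiring R]

theorem dartSymmMatrix_mul_self : dartSymmMatrix G R * dartSymmMatrix G R = 1 := by
  ext e f
  simp only [dartSymmMatrix, Matrix.mul_apply, Matrix.of_apply, ite_mul, one_mul, zero_mul,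
    Finset.sum_ite_eq', Finset.mem_univ, if_true, Dart.symm_symm, Matrix.one_apply, eq_comm]

theorem dartSymmMatrix_mul_dartFstMatrix :
    dartSymmMatrix G R * dartFstMatrix G R = dartSndMatrix G R := by
  ext e v
  simp only [dartSymmMatrix, dartFstMatrix, dartSndMatrix, Matrix.mul_apply, Matrix.of_apply,
    ite_mul, one_mul, zero_mul, Finset.sum_ite_eq', Finset.mem_univ, if_true, Dart.symm_toProd,
    Prod.fst_swap]

theorem transpose_dartSndMatrix_mul_dartFstMatrix :
    (dartSndMatrix G R)ᵀ * dartFstMatrix G R = G.adjMatrix R := by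
  ext v w
  have hterm : ∀ e : G.Dart, (dartSndMatrix G R)ᵀ v e * dartFstMatrix G R e w =
      if e.toProd = (w, v) then 1 else 0 := fun e => by
    simp [dartSndMatrix, dartFstMatrix, Prod.ext_iff, ite_and]
  simp only [Matrix.mul_apply, hterm, sum_dart_ite_toProd_eq, adjMatrix_apply, G.adj_comm w v,
    dite_eq_ite]

theorem transpose_dartSndMatrix_mul_self :
    (dartSndMatrix G R)ᵀ * dartSndMatrix G R = diagonal fun v => (G.degree v : R) := by
  ext v w
  by_cases h : v = w
  · subst h
    simp only [dartSndMatrix, Matrix.mul_apply, Matrix.transpose_apply, Matrix.of_apply,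
      ite_zero_mul_ite_zero, one_mul, and_self, sum_dart_snd_eq_degree, diagonal_apply_eq]
  · rw [diagonal_apply_ne _ h, Matrix.mul_apply]
    refine Finset.sum_eq_zero fun e _ => ?_
    simp only [dartSndMatrix, Matrix.transpose_apply, Matrix.of_apply, ite_zero_mul_ite_zero]
    exact if_neg fun hvw => h (hvw.1.symm.trans hvw.2)

variable {K : Type*} [Field K]

theorem smul_one_sub_nonBacktracking_eq_mul (s : K) (hs : s ^ 2 ≠ 1) :
    s • 1 - nonBacktracking G K = (s • 1 + dartSymmMatrix G K) *
      (1 - ((1 - s ^ 2)⁻¹ • ((dartSymmMatrix G K - s • 1) * dartFstMatrix G K)) *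
        (dartSndMatrix G K)ᵀ) := by
  have hunit : (s • 1 + dartSymmMatrix G K) * (dartSymmMatrix G K - s • 1) = (1 - s ^ 2) • 1 := by
    simp only [Matrix.add_mul, Matrix.mul_sub, Matrix.smul_mul, Matrix.mul_smul, Matrix.one_mul,
      Matrix.mul_one, dartSymmMatrix_mul_self]
    module
  have hs' : 1 - s ^ 2 ≠ 0 := sub_ne_zero.mpr (Ne.symm hs)
  rw [Matrix.mul_sub, Matrix.mul_one, Matrix.smul_mul, Matrix.mul_smul, ← Matrix.mul_assoc,
    ← Matrix.mul_assoc, hunit, Matrix.smul_mul, Matrix.smul_mul, smul_smul, inv_mul_cancel₀ hs',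
    one_smul, Matrix.one_mul, nonBacktracking_eq_sub]
  abel

theorem det_smul_one_sub_nonBacktracking (s : K) (hs : s ^ 2 ≠ 1) :
    (s ^ 2 - 1) ^ Fintype.card V * det (s • 1 - nonBacktracking G K) =
      det (s • 1 + dartSymmMatrix G K) *
        det ((s ^ 2 - 1) • 1 + diagonal (fun v => (G.degree v : K)) - s • G.adjMatrix K) := by
  have hs' : s ^ 2 - 1 ≠ 0 := sub_ne_zero.mpr hs
  have hcomm : (dartSndMatrix G K)ᵀ * ((1 - s ^ 2)⁻¹ • ((dartSymmMatrix G K - s • 1) *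
      dartFstMatrix G K)) =
      (1 - s ^ 2)⁻¹ • (diagonal (fun v => (G.degree v : K)) - s • G.adjMatrix K) := by
    rw [Matrix.mul_smul, Matrix.sub_mul, Matrix.mul_sub, dartSymmMatrix_mul_dartFstMatrix,
      transpose_dartSndMatrix_mul_self, Matrix.smul_mul, Matrix.one_mul, Matrix.mul_smul,
      transpose_dartSndMatrix_mul_dartFstMatrix]
  rw [smul_one_sub_nonBacktracking_eq_mul G s hs, det_mul, det_one_sub_mul_comm, hcomm,
    mul_left_comm, ← det_smul]
  congr 2
  rw [smul_sub, smul_smul, show (s ^ 2 - 1) * (1 - s ^ 2)⁻¹ = -1 by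
    rw [← neg_sub, neg_mul, mul_inv_cancel₀ (by rwa [← neg_sub, neg_ne_zero] at hs')],
    neg_one_smul]
  abel

theorem det_smul_one_sub_nonBacktracking_sq {k : ℕ} (hreg : G.IsRegularOfDegree k) (s : K)
    (hs : s ^ 2 ≠ 1) :
    (s ^ 2 - 1) ^ (2 * Fintype.card V) * det (s ^ 2 • 1 - nonBacktracking G K ^ 2) =
      (s ^ 2 - 1) ^ Fintype.card G.Dart *
        (det ((s ^ 2 + k - 1) • 1 - s • G.adjMatrix K) *
          det ((s ^ 2 + k - 1) • 1 - (-s) • G.adjMatrix K)) := by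
  have hdiag : (s ^ 2 - 1) • 1 + diagonal (fun v => (G.degree v : K)) = (s ^ 2 + k - 1) • 1 := by
    ext v w
    by_cases h : v = w
    · subst h
      simp [hreg v]
      ring
    · simp [h]
  have hfactor : s ^ 2 • (1 : Matrix G.Dart G.Dart K) - nonBacktracking G K ^ 2 =
      (-1 : K) • ((s • 1 - nonBacktracking G K) * ((-s) • 1 - nonBacktracking G K)) := by
    simp only [sq, Matrix.mul_sub, Matrix.sub_mul, Matrix.smul_mul, Matrix.mul_smul,
      Matrix.one_mul, Matrix.mul_one]
    module
  have hsymm : (-1) ^ Fintype.card G.Dart *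
      (det (s • 1 + dartSymmMatrix G K) * det ((-s) • 1 + dartSymmMatrix G K)) =
      (s ^ 2 - 1) ^ Fintype.card G.Dart := by
    have : (s • 1 + dartSymmMatrix G K) * ((-s) • 1 + dartSymmMatrix G K) =
        (-1 * (s ^ 2 - 1)) • 1 := by
      simp only [Matrix.add_mul, Matrix.mul_add, Matrix.smul_mul, Matrix.mul_smul, Matrix.one_mul,
        Matrix.mul_one, dartSymmMatrix_mul_self]
      module
    rw [← det_mul, this, det_smul, det_one, mul_one, ← mul_pow]
    ring
  have hplus := det_smul_one_sub_nonBacktracking G s hs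
  have hminus := det_smul_one_sub_nonBacktracking G (-s) (by rwa [neg_sq])
  rw [neg_sq, hdiag] at hminus
  rw [hdiag] at hplus
  rw [hfactor, det_smul, det_mul]
  linear_combination (-1) ^ Fintype.card G.Dart *
    ((s ^ 2 - 1) ^ Fintype.card V * det ((-s) • 1 - nonBacktracking G K) * hplus +
      det (s • 1 + dartSymmMatrix G K) * det ((s ^ 2 + k - 1) • 1 - s • G.adjMatrix K) * hminus) +
    det ((s ^ 2 + k - 1) • 1 - s • G.adjMatrix K) *
      det ((s ^ 2 + k - 1) • 1 - (-s) • G.adjMatrix K) * hsymm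

end IharaBass

end SimpleGraph

section Grover

variable {V : Type*} [Fintype V] [DecidableEq V] (G : SimpleGraph V) [DecidableRel G.Adj]

open SimpleGraph

theorem grover_apply (e f : G.Dart) :
    grover G e f = if f.snd = e.fst then
      2 / (G.degree e.fst : ℝ) - (if f = e.symm then 1 else 0) else 0 := by
  by_cases hs : f = e.symm <;> simp [grover, hs]

theorem grover_sq_apply (e f : G.Dart) :
    (grover G ^ 2) e f = if G.Adj f.snd e.fst then
      (2 / (G.degree e.fst : ℝ) - if f.snd = e.snd then 1 else 0) *
        (2 / (G.degree f.snd : ℝ) - if f.fst = e.fst then 1 else 0) else 0 := by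
  have hsupp : ∀ e f, grover G e f ≠ 0 → f.snd = e.fst := fun e f hef => by
    by_contra h
    exact hef (by simp [grover_apply, h])
  rw [sq, dart_matrix_mul_apply hsupp hsupp]
  by_cases h : G.Adj f.snd e.fst
  · simp [h, grover_apply, Dart.mk_eq_symm_iff, Dart.eq_mk_iff]
  · simp [h]

theorem posSupp_grover_sq (hdeg : ∀ v, 3 ≤ G.degree v) :
    posSupp (grover G ^ 2) = nonBacktracking G ℝ ^ 2 + 1 := by
  have hweight : ∀ v, 0 < 2 / (G.degree v : ℝ) ∧ 2 / (G.degree v : ℝ) < 1 := fun v => by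
    have : (3 : ℝ) ≤ G.degree v := by exact_mod_cast hdeg v
    constructor
    · positivity
    · rw [div_lt_one (by linarith)]
      linarith
  ext e f
  obtain ⟨ha0, ha1⟩ := hweight e.fst
  obtain ⟨hb0, hb1⟩ := hweight f.snd
  have hef : e = f ↔ f.fst = e.fst ∧ f.snd = e.snd := by
    rw [Dart.ext_iff, Prod.ext_iff, eq_comm (a := e.fst), eq_comm (a := e.snd)]
  have he : G.Adj e.snd e.fst := e.adj.symm
  simp only [posSupp, grover_sq_apply, Matrix.add_apply, nonBacktracking_sq_apply,
    Matrix.one_apply, hef]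
  split_ifs <;> first | nlinarith | simp_all

end Grover

theorem Matrix.det_smul_one_sub_smul_eq_prod_roots {n K : Type*} [Fintype n] [DecidableEq n]
    [Field K] [IsAlgClosed K] (M : Matrix n n K) (a b : K) :
    det (a • 1 - b • M) = (M.charpoly.roots.map fun l => a - b * l).prod := by
  have hcard : Multiset.card M.charpoly.roots = Fintype.card n := by
    rw [← (IsAlgClosed.splits _).natDegree_eq_card_roots, charpoly_natDegree_eq_dim]
  by_cases hb : b = 0
  · simp [hb, hcard]
  · have hM : a • 1 - b • M = b • (scalar n (a / b) - M) := by
      rw [smul_sub, scalar_apply, ← smul_one_eq_diagonal, smul_smul, mul_div_cancel₀ _ hb]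
    rw [hM, det_smul, ← eval_charpoly, (IsAlgClosed.splits _).eval_eq_prod_roots_of_monic
      (charpoly_monic M), ← hcard, ← Multiset.prod_replicate, ← Multiset.map_const',
      ← Multiset.prod_map_mul]
    congr 1
    refine Multiset.map_congr rfl fun l _ => ?_
    field_simp

theorem sub_muEig_mul_sub_muEig (k : ℕ) (x l : ℂ) :
    (x - muEig k l 1) * (x - muEig k l (-1)) = (x + k - 2) ^ 2 - (x - 1) * l ^ 2 := by
  have hw : (((k : ℂ) - 1 - l ^ 2 / 4) ^ ((1 : ℂ) / 2)) ^ 2 = (k : ℂ) - 1 - l ^ 2 / 4 := by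
    rw [one_div]
    exact Complex.cpow_ofNat_inv_pow _ 2
  simp only [muEig]
  push_cast
  linear_combination
    (-l ^ 2 * (((k : ℂ) - 1 - l ^ 2 / 4) ^ ((1 : ℂ) / 2)) ^ 2) * Complex.I_sq + l ^ 2 * hw

theorem eval_prod_muEig_factors {n : Type*} [Fintype n] [DecidableEq n] (A : Matrix n n ℂ)
    (k : ℕ) {x s : ℂ} (hs : s ^ 2 = x - 1) :
    eval x (A.charpoly.roots.map fun l => (X - C (muEig k l 1)) * (X - C (muEig k l (-1)))).prod =
      det ((s ^ 2 + k - 1) • 1 - s • A) * det ((s ^ 2 + k - 1) • 1 - (-s) • A) := by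
  rw [eval_multiset_prod, Multiset.map_map, det_smul_one_sub_smul_eq_prod_roots,
    det_smul_one_sub_smul_eq_prod_roots, ← Multiset.prod_map_mul]
  congr 1
  refine Multiset.map_congr rfl fun l _ => ?_
  simp only [Function.comp_apply, eval_mul, eval_sub, eval_X, eval_C, sub_muEig_mul_sub_muEig]
  linear_combination (-(x + s ^ 2 + 2 * k - 3 - l ^ 2)) * hs

namespace SimpleGraph

variable {V : Type*} [Fintype V] [DecidableEq V] (G : SimpleGraph V) [DecidableRel G.Adj]

theorem charpoly_nonBacktracking_sq_add_one {k : ℕ} (hreg : G.IsRegularOfDegree k) (hk : 2 ≤ k) :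
    (nonBacktracking G ℂ ^ 2 + 1).charpoly =
      (X - C 2) ^ (2 * (G.edgeFinset.card - Fintype.card V)) *
        ((G.adjMatrix ℂ).charpoly.roots.map
          fun l => (X - C (muEig k l 1)) * (X - C (muEig k l (-1)))).prod := by
  have hdart : Fintype.card G.Dart =
      2 * Fintype.card V + 2 * (G.edgeFinset.card - Fintype.card V) := by
    have hsum : ∑ v, G.degree v = k * Fintype.card V := by simp [hreg _, mul_comm]
    have : 2 * Fintype.card V ≤ k * Fintype.card V := Nat.mul_le_mul_right _ hk
    rw [sum_degrees_eq_twice_card_edges] at hsum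
    rw [dart_card_eq_twice_card_edges]
    omega
  -- Compare values off `x = 2`, the only point where the factor `s² - 1 = x - 2` degenerates.
  refine eq_of_infinite_eval_eq _ _ ((Set.finite_singleton 2).infinite_compl.mono fun x hx => ?_)
  obtain ⟨s, hs⟩ := IsAlgClosed.exists_pow_nat_eq (x - 1) two_pos
  have hs1 : s ^ 2 - 1 ≠ 0 := by
    rw [hs, sub_sub, sub_ne_zero]
    norm_num
    exact hx
  have hlhs : eval x (nonBacktracking G ℂ ^ 2 + 1).charpoly =
      det (s ^ 2 • 1 - nonBacktracking G ℂ ^ 2) := by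
    rw [eval_charpoly, hs, scalar_apply, ← smul_one_eq_diagonal, sub_smul, one_smul]
    congr 1
    abel
  rw [Set.mem_ofPred_eq, hlhs, eval_mul, eval_pow, eval_sub, eval_X, eval_C,
    eval_prod_muEig_factors _ k hs, show x - 2 = s ^ 2 - 1 by rw [hs]; ring]
  apply mul_left_cancel₀ (pow_ne_zero (2 * Fintype.card V) hs1)
  rw [det_smul_one_sub_nonBacktracking_sq G hreg s (sub_ne_zero.mp hs1), hdart, pow_add]
  ring

end SimpleGraph

open SimpleGraph

theorem spectrum_posSupp_grover_sq_general {V : Type*} [Fintype V] [DecidableEq V]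
    (G : SimpleGraph V) [DecidableRel G.Adj] (k : ℕ) (hk : 3 ≤ k)
    (hreg : G.IsRegularOfDegree k) :
    (∀ lam : ℝ, lam ∈ spectrum ℝ (G.adjMatrix ℝ) → ∀ s : ℝ, s = 1 ∨ s = -1 →
      muEig k (lam : ℂ) s ∈
        spectrum ℂ ((posSupp ((grover G) ^ 2)).map (Complex.ofReal ·))) ∧
    Matrix.charpoly ((posSupp ((grover G) ^ 2)).map (Complex.ofReal ·)) =
      (X - C 2) ^ (2 * (G.edgeFinset.card - Fintype.card V)) *
        ((Matrix.charpoly (G.adjMatrix ℂ)).roots.map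
          (fun lam => (X - C (muEig k lam 1)) * (X - C (muEig k lam (-1))))).prod := by
  have hU : (posSupp (grover G ^ 2)).map (Complex.ofReal ·) = nonBacktracking G ℂ ^ 2 + 1 := by
    rw [posSupp_grover_sq G fun v => hreg v ▸ hk]
    change Complex.ofRealHom.mapMatrix _ = _
    rw [map_add, map_pow, map_one, RingHom.mapMatrix_apply, map_nonBacktracking]
  have hpoly := hU ▸ charpoly_nonBacktracking_sq_add_one G hreg (by omega)
  refine ⟨fun lam hlam s hs => ?_, hpoly⟩
  have hroot : (lam : ℂ) ∈ (G.adjMatrix ℂ).charpoly.roots := by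
    rw [mem_roots (charpoly_monic _).ne_zero, ← map_adjMatrix G Complex.ofRealHom, charpoly_map]
    exact (mem_spectrum_iff_isRoot_charpoly.mp hlam).map
  rw [mem_spectrum_iff_isRoot_charpoly, hpoly, IsRoot, eval_mul, eval_multiset_prod,
    Multiset.map_map]
  refine mul_eq_zero_of_right _ (Multiset.prod_eq_zero (Multiset.mem_map.mpr ⟨lam, hroot, ?_⟩))
  rcases hs with rfl | rfl <;> simp

/-- for a simple connected `k`-regular graph (`k ≥ 3`), each adjacency
eigenvalue `λ` gives eigenvalues `μ± = (λ² − 2k + 4)/2 ± i λ √(k − 1 − λ²/4)` of `(U²)⁺`,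
and the remaining `2(m − n)` eigenvalues of `(U²)⁺` are all `2`:  the characteristic
polynomial factors accordingly. -/
theorem spectrum_posSupp_grover_sq {V : Type*} [Fintype V] [DecidableEq V]
    (G : SimpleGraph V) [DecidableRel G.Adj] (hconn : G.Connected) (k : ℕ) (hk : 3 ≤ k)
    (hreg : G.IsRegularOfDegree k) :
    (∀ lam : ℝ, lam ∈ spectrum ℝ (G.adjMatrix ℝ) → ∀ s : ℝ, s = 1 ∨ s = -1 →
      muEig k (lam : ℂ) s ∈
        spectrum ℂ ((posSupp ((grover G) ^ 2)).map (Complex.ofReal ·))) ∧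
    Matrix.charpoly ((posSupp ((grover G) ^ 2)).map (Complex.ofReal ·)) =
      (X - C 2) ^ (2 * (G.edgeFinset.card - Fintype.card V)) *
        ((Matrix.charpoly (G.adjMatrix ℂ)).roots.map
          (fun lam => (X - C (muEig k lam 1)) * (X - C (muEig k lam (-1))))).prod :=
  spectrum_posSupp_grover_sq_general G k hk hreg
end

section
/- Let G be a connected graph with n vertices and m edges, and define f_G(u) = det(Iₙ − u·A + u²(D − Iₙ)). Then f_G(1) = 0 and the derivative satisfies f_G'(1) = 2(m − n)·κ(G), where κ(G) is the number of spanning trees of G. -/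
open Matrix

/-- The diagonal degree matrix of a graph. -/
noncomputable def degMatrix {V : Type*} [Fintype V] [DecidableEq V] (G : SimpleGraph V)
    [DecidableRel G.Adj] : Matrix V V ℝ := Matrix.diagonal fun v => (G.degree v : ℝ)

/-- The number of spanning trees (complexity) of a graph. -/
noncomputable def numSpanningTrees {V : Type*} [Fintype V] (G : SimpleGraph V) : ℕ :=
  Nat.card {H : G.Subgraph // H.IsSpanning ∧ H.spanningCoe.IsTree}

/-- The Ihara polynomial `f_G(u) = det(I_n − u A + u² (D − I_n))` as a function of `u`. -/
noncomputable def iharaPoly {V : Type*} [Fintype V] [DecidableEq V] (G : SimpleGraph V)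
    [DecidableRel G.Adj] : ℝ → ℝ := fun u =>
  ((1 : Matrix V V ℝ) - u • G.adjMatrix ℝ + (u ^ 2) • (degMatrix G - 1)).det

/-!
Every row of `M(u) = I - uA + u²(D - I)` sums to `(1 - u)(1 + u - u d_v)`. Replacing the column
of a vertex `v₀` by the sum of all columns therefore gives `f_G(u) = (1 - u) g(u)`, where `g(u)` is
the determinant of `M(u)` with column `v₀` replaced by `(1 + u - u d_v)_v`. Hence `f_G(1) = 0` and
`f_G'(1) = -g(1)`. Since `M(1)` is the Laplacian `L`, Cramer's rule gives
`g(1) = ∑_v adj(L)_{v₀ v} (2 - d_v)`, and by the matrix-tree theorem every entry of `adj L` is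
`κ(G)`, while `∑_v (2 - d_v) = 2n - 2m`.

For the matrix-tree theorem, write `L + e_{v₀} e_{v₀}ᵀ` as `∑ b bᵀ` over the vectors `e_a - e_c`
of the edges `ac` together with `e_{v₀}`, and expand its determinant by Cauchy–Binet over
`n`-element families of these vectors. A family contributes `1` if it is `e_{v₀}` together with the
edges of a spanning tree (listing each vertex with the edge towards its parent, ordered by distance
to `v₀`, gives a unitriangular factor), and `0` otherwise, since then a nonzero vector is orthogonal
to the whole family: the all-ones vector if `e_{v₀}` is missing, else the indicator of the vertices
not joined to `v₀` by the chosen edges. As `det L = 0`, this determinant is the cofactor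
`adj(L)_{v₀ v₀}`; the columns of `adj L` lie in `ker L`, so on a connected graph they are constant.
-/

open Finset

theorem Finset.sum_powersetCard_succ_insert {α M : Type*} [DecidableEq α] [AddCommMonoid M]
    {x : α} {s : Finset α} (hx : x ∉ s) (k : ℕ) (f : Finset α → M) :
    ∑ T ∈ (insert x s).powersetCard (k + 1), f T =
      ∑ T ∈ s.powersetCard (k + 1), f T + ∑ T ∈ s.powersetCard k, f (insert x T) := by
  rw [powersetCard_succ_insert hx, sum_union, sum_image]
  · intro T hT U hU h
    have hxT : x ∉ T := fun h' => hx ((mem_powersetCard.mp hT).1 h')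
    have hxU : x ∉ U := fun h' => hx ((mem_powersetCard.mp hU).1 h')
    rw [← erase_insert hxT, ← erase_insert hxU, h]
  · refine disjoint_left.mpr fun T hT hT' => ?_
    obtain ⟨U, -, rfl⟩ := mem_image.mp hT'
    exact hx ((mem_powersetCard.mp hT).1 (mem_insert_self x U))

namespace Matrix
variable {R m n ι : Type*} [CommRing R]

theorem transpose_mul_eq_sum_vecMulVec [Fintype m] (A B : Matrix m n R) :
    Aᵀ * B = ∑ k, vecMulVec (A k) (B k) := by
  ext i j
  simp [mul_apply, Matrix.sum_apply, vecMulVec_apply]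

theorem BlockTriangular.det_eq_prod_diag [Fintype m] [DecidableEq m] {α : Type*} [LinearOrder α]
    {M : Matrix m m R} {b : m → α} (hM : M.BlockTriangular b)
    (hblock : ∀ i j, i ≠ j → b i = b j → M i j = 0) : M.det = ∏ i, M i i := by
  let e := Fintype.equivFin m
  -- refine `b` to a linear order on `m` for which `M` is upper triangular
  let _ : LinearOrder m := LinearOrder.lift' (fun i => toLex (b i, e i)) fun i j h => by
    simpa using congrArg (fun p => (ofLex p).2) h
  refine det_of_isUpperTriangular fun i j hij => ?_
  rcases Prod.Lex.lt_iff.mp hij with h | ⟨h, h'⟩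
  · exact hM h
  · exact hblock i j (fun hij' => by subst hij'; exact lt_irrefl _ h') h.symm

variable [Fintype n] [DecidableEq n]

theorem det_sum_vecMulVec_eq_sum_piFinset (x y : ι → n → R) (t : Finset ι) :
    (∑ a ∈ t, vecMulVec (x a) (y a)).det =
      ∑ f ∈ Fintype.piFinset fun _ : n => t, (∏ i, x (f i) i) * (of fun i => y (f i)).det := by
  have hrows : ∑ a ∈ t, vecMulVec (x a) (y a) = of fun i => ∑ a ∈ t, x a i • y a := by
    ext i j
    simp [Matrix.sum_apply, vecMulVec_apply, Finset.sum_apply]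
  let D := (detRowAlternating : (n → R) [⋀^n]→ₗ[R] R).toMultilinearMap
  calc (∑ a ∈ t, vecMulVec (x a) (y a)).det = D fun i => ∑ a ∈ t, x a i • y a := by
        rw [hrows]; rfl
    _ = ∑ f ∈ Fintype.piFinset fun _ : n => t, D fun i => x (f i) i • y (f i) :=
        D.map_sum_finset _ _
    _ = _ := by
        refine sum_congr rfl fun f _ => ?_
        rw [D.map_smul_univ, smul_eq_mul]
        rfl

/-- The Cauchy–Binet formula for `Xᵀ Y`, with the rows of `X` and `Y` indexed by `s`. -/
theorem det_sum_vecMulVec_eq_sum_powersetCard [DecidableEq ι] (x y : ι → n → R) (s : Finset ι) :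
    (∑ a ∈ s, vecMulVec (x a) (y a)).det =
      ∑ T ∈ s.powersetCard (Fintype.card n), (∑ a ∈ T, vecMulVec (x a) (y a)).det := by
  set term : (n → ι) → R := fun f => (∏ i, x (f i) i) * (of fun i => y (f i)).det
  have hinj : ∀ t : Finset ι, (∑ a ∈ t, vecMulVec (x a) (y a)).det =
      ∑ f ∈ Fintype.piFinset (fun _ : n => t) with f.Injective, term f := by
    intro t
    rw [det_sum_vecMulVec_eq_sum_piFinset, sum_filter_of_ne]
    intro f _ hf
    by_contra hni
    obtain ⟨i, j, hij, hne⟩ := Function.not_injective_iff.mp hni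
    have hdet : (of fun i => y (f i)).det = 0 := det_zero_of_row_eq hne (by ext; simp [hij])
    exact hf (by simp only [term, hdet, mul_zero])
  have hfiber : ∀ T ∈ s.powersetCard (Fintype.card n),
      ((Fintype.piFinset fun _ : n => s).filter Function.Injective).filter
          (fun f => univ.image f = T) =
        (Fintype.piFinset fun _ : n => T).filter Function.Injective := by
    intro T hT
    rw [mem_powersetCard] at hT
    ext f
    simp only [mem_filter, Fintype.mem_piFinset]
    constructor
    · rintro ⟨⟨-, hf⟩, rfl⟩
      exact ⟨fun i => mem_image_of_mem f (mem_univ i), hf⟩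
    · rintro ⟨hT', hf⟩
      have himage : univ.image f = T := eq_of_subset_of_card_le
        (fun _ h => by obtain ⟨i, -, rfl⟩ := mem_image.mp h; exact hT' i)
        (by rw [card_image_of_injective _ hf, card_univ, hT.2])
      exact ⟨⟨fun i => hT.1 (hT' i), hf⟩, himage⟩
  rw [hinj, ← sum_fiberwise_of_maps_to (g := fun f => univ.image f) (t := s.powersetCard _)]
  · refine sum_congr rfl fun T hT => ?_
    rw [hinj, hfiber T hT]
  · intro f hf
    simp only [mem_filter, Fintype.mem_piFinset] at hf
    rw [mem_powersetCard, card_image_of_injective _ hf.2, card_univ]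
    exact ⟨fun _ h => by obtain ⟨i, -, rfl⟩ := mem_image.mp h; exact hf.1 i, rfl⟩

theorem det_sum_vecMulVec_eq_zero [IsDomain R] (x y : ι → n → R) (t : Finset ι) {v : n → R}
    (hv : v ≠ 0) (h : ∀ a ∈ t, y a ⬝ᵥ v = 0) : (∑ a ∈ t, vecMulVec (x a) (y a)).det = 0 := by
  refine exists_mulVec_eq_zero_iff.mp ⟨v, hv, ?_⟩
  simp only [sum_mulVec, vecMulVec_mulVec, op_smul_eq_smul]
  exact sum_eq_zero fun a ha => by rw [h a ha, zero_smul]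

theorem det_add_vecMulVec_single (A : Matrix n n R) (u : n → R) (j : n) :
    (A + vecMulVec u (Pi.single j 1)).det = A.det + (A.adjugate *ᵥ u) j := by
  have hcol : A + vecMulVec u (Pi.single j 1) = A.updateCol j ((fun k => A k j) + u) := by
    ext i k
    by_cases hk : k = j
    · subst hk; simp [vecMulVec_apply]
    · simp [vecMulVec_apply, hk]
  rw [hcol, det_updateCol_add, updateCol_eq_self, ← cramer_apply, cramer_eq_adjugate_mulVec]

theorem det_eq_mul_det_updateCol_of_sum_eq (A : Matrix n n R) (c : R) (r : n → R)
    (h : ∀ i, ∑ j, A i j = c * r i) (j : n) : A.det = c * (A.updateCol j r).det := by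
  have hsum := det_updateCol_sum A j fun _ => 1
  simp only [one_smul, h] at hsum
  rw [← hsum, ← det_updateCol_smul]
  rfl

theorem det_single_sub_single_parent_eq_one (v₀ : n) (p : n → n) (d : n → ℕ)
    (hd : ∀ v, v ≠ v₀ → d (p v) < d v) :
    (of fun v => if v = v₀ then Pi.single v₀ (1 : R) else Pi.single v 1 - Pi.single (p v) 1).det
      = 1 := by
  set Z : Matrix n n R :=
    of fun v => if v = v₀ then Pi.single v₀ 1 else Pi.single v 1 - Pi.single (p v) 1
  have hZ : ∀ i j, Z i j = if i = v₀ then (if j = v₀ then 1 else 0)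
      else (if j = i then 1 else 0) - (if j = p i then 1 else 0) := by
    intro i j
    by_cases hi : i = v₀ <;> simp [Z, hi, Pi.single_apply]
  have hzero : ∀ i j, j ≠ i → d i ≤ d j → Z i j = 0 := by
    intro i j hji hij
    have := hd i
    rw [hZ]
    split_ifs <;> grind
  have hdiag : ∀ i, Z i i = 1 := by
    intro i
    have := hd i
    rw [hZ]
    split_ifs <;> grind
  have hblock : Z.BlockTriangular fun v => OrderDual.toDual (d v) :=
    fun i j (hij : d i < d j) => hzero i j (fun h => by subst h; exact lt_irrefl _ hij) hij.le
  rw [hblock.det_eq_prod_diag fun i j hij hd => hzero i j (Ne.symm hij) (le_of_eq hd),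
    prod_eq_one fun i _ => hdiag i]

theorem differentiableAt_det {𝕜 : Type*} [NontriviallyNormedField 𝕜] {M : 𝕜 → Matrix n n 𝕜}
    {x : 𝕜} (hM : ∀ i j, DifferentiableAt 𝕜 (fun y => M y i j) x) :
    DifferentiableAt 𝕜 (fun y => (M y).det) x := by
  simp only [det_apply']
  fun_prop

end Matrix

namespace Sym2
variable (R : Type*) {V : Type*} [CommRing R] [DecidableEq V]

/-- `e_a - e_b` for `e = s(a, b)`, with the sign fixed by an arbitrary choice of representative:
only `vecMulVec (diffVec R e) (diffVec R e)` and the kernel of `diffVec R e` are used. -/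
noncomputable def diffVec (e : Sym2 V) : V → R :=
  Pi.single (Quot.out e).1 1 - Pi.single (Quot.out e).2 1

variable {R}

theorem vecMulVec_diffVec_self_mk (a b : V) :
    vecMulVec (diffVec R s(a, b)) (diffVec R s(a, b)) =
      vecMulVec (Pi.single a 1 - Pi.single b 1) (Pi.single a 1 - Pi.single b 1) := by
  have hout : s((Quot.out s(a, b)).1, (Quot.out s(a, b)).2) = s(a, b) := Quot.out_eq _
  rcases Sym2.eq_iff.mp hout with ⟨h1, h2⟩ | ⟨h1, h2⟩
  · rw [diffVec, h1, h2]
  · rw [diffVec, h1, h2, ← neg_sub, neg_vecMulVec, vecMulVec_neg, neg_neg]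

theorem vecMulVec_diffVec_self_apply {e : Sym2 V} (he : ¬e.IsDiag) (i j : V) :
    vecMulVec (diffVec R e) (diffVec R e) i j =
      if i = j then (if i ∈ e then 1 else 0) else (if e = s(i, j) then -1 else 0) := by
  induction e using Sym2.ind with
  | _ a b =>
  have hab : a ≠ b := fun h => he (by simp [h])
  rw [vecMulVec_diffVec_self_mk, vecMulVec_apply]
  simp only [Pi.sub_apply, Pi.single_apply, Sym2.mem_iff, Sym2.eq_iff]
  grind

theorem diffVec_dotProduct_eq_zero [Fintype V] {e : Sym2 V} {x : V → R}
    (hx : ∀ a b, s(a, b) = e → x a = x b) : diffVec R e ⬝ᵥ x = 0 := by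
  rw [diffVec, sub_dotProduct, single_one_dotProduct, single_one_dotProduct, sub_eq_zero]
  exact hx _ _ (Quot.out_eq e)

end Sym2

namespace SimpleGraph
variable {V : Type*}

theorem Connected.exists_adj_dist_add_one_eq {H : SimpleGraph V} (hc : H.Connected) {v v₀ : V}
    (hv : v ≠ v₀) : ∃ w, H.Adj v w ∧ H.dist w v₀ + 1 = H.dist v v₀ := by
  obtain ⟨p, hp⟩ := hc.exists_walk_length_eq_dist v v₀
  cases p with
  | nil => exact absurd rfl hv
  | @cons _ w _ hadj q =>
    refine ⟨w, hadj, le_antisymm ?_ ?_⟩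
    · rw [← hp, Walk.length_cons]
      exact Nat.add_le_add_right (dist_le q) 1
    · have := hc.dist_triangle (u := v) (v := w) (w := v₀)
      rw [dist_eq_one_iff_adj.mpr hadj] at this
      omega

theorem edgeSet_fromEdgeSet_of_subset (G : SimpleGraph V) {s : Set (Sym2 V)}
    (hs : s ⊆ G.edgeSet) : (fromEdgeSet s).edgeSet = s := by
  rw [edgeSet_fromEdgeSet, sdiff_eq_left]
  exact Set.disjoint_left.mpr fun e he => G.not_isDiag_of_mem_edgeSet (hs he)

theorem natCard_edgeSet_fromEdgeSet_of_subset (G : SimpleGraph V) [Fintype G.edgeSet]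
    {T : Finset (Sym2 V)} (hT : T ⊆ G.edgeFinset) :
    Nat.card (fromEdgeSet (T : Set (Sym2 V))).edgeSet = #T := by
  rw [edgeSet_fromEdgeSet_of_subset G fun e he => mem_edgeFinset.mp (hT he), Nat.card_coe_set_eq,
    Set.ncard_coe_finset]

open Classical in
theorem numSpanningTrees_eq_card_filter_isTree [Fintype V] (G : SimpleGraph V)
    [DecidableRel G.Adj] :
    numSpanningTrees G = #(G.edgeFinset.powerset.filter
      fun T : Finset (Sym2 V) => (fromEdgeSet (T : Set (Sym2 V))).IsTree) := by
  rw [numSpanningTrees, ← Nat.card_eq_finsetCard]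
  refine Nat.card_congr
    { toFun := fun H => ⟨H.1.spanningCoe.edgeFinset, ?_⟩
      invFun := fun T => ⟨toSubgraph (G := G) (fromEdgeSet (T.1 : Set (Sym2 V))) ?_, ?_⟩
      left_inv := ?_
      right_inv := ?_ }
  · obtain ⟨H, -, htree⟩ := H
    rw [mem_filter, mem_powerset, coe_edgeFinset, fromEdgeSet_edgeSet]
    exact ⟨edgeFinset_mono H.spanningCoe_le, htree⟩
  · intro a b hab
    rw [fromEdgeSet_adj] at hab
    exact mem_edgeFinset.mp (mem_powerset.mp (mem_filter.mp T.2).1 hab.1)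
  · exact ⟨toSubgraph.isSpanning _ _, (mem_filter.mp T.2).2⟩
  · rintro ⟨H, hspan, -⟩
    ext
    · simp [Set.eq_univ_of_forall hspan]
    · simpa [coe_edgeFinset] using fun (h : H.Adj _ _) => h.ne
  · rintro ⟨T, hT⟩
    refine Subtype.ext (coe_injective ?_)
    rw [coe_edgeFinset]
    exact edgeSet_fromEdgeSet_of_subset G fun e he =>
      mem_edgeFinset.mp (mem_powerset.mp (mem_filter.mp hT).1 he)

variable [Fintype V] [DecidableEq V]

theorem sum_vecMulVec_diffVec_self (R : Type*) [CommRing R] (G : SimpleGraph V)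
    [DecidableRel G.Adj] :
    ∑ e ∈ G.edgeFinset, vecMulVec (Sym2.diffVec R e) (Sym2.diffVec R e) = G.lapMatrix R := by
  ext i j
  rw [Matrix.sum_apply, sum_congr rfl fun e he =>
    Sym2.vecMulVec_diffVec_self_apply (G.not_isDiag_of_mem_edgeSet (mem_edgeFinset.mp he)) i j]
  by_cases hij : i = j
  · subst hij
    simp only [if_true, sum_boole, ← incidenceFinset_eq_filter, card_incidenceFinset_eq_degree]
    simp [lapMatrix, degMatrix]
  · simp only [hij, if_false, sum_ite_eq', mem_edgeFinset, mem_edgeSet]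
    simp [lapMatrix, degMatrix, hij, adjMatrix_apply]
    split_ifs <;> simp

theorem det_lapMatrix_add_vecMulVec_single_of_not_connected (H : SimpleGraph V)
    [DecidableRel H.Adj] (v₀ : V) (h : ¬H.Connected) :
    (H.lapMatrix ℝ + vecMulVec (Pi.single v₀ 1) (Pi.single v₀ 1)).det = 0 := by
  obtain ⟨u, hu⟩ : ∃ u, ¬H.Reachable u v₀ := by
    by_contra! hall
    exact h ((connected_iff H).mpr ⟨fun a b => (hall a).trans (hall b).symm, ⟨v₀⟩⟩)
  refine exists_mulVec_eq_zero_iff.mp ⟨fun v => if H.Reachable v v₀ then 0 else 1, ?_, ?_⟩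
  · exact fun h0 => by simpa [hu] using congrFun h0 u
  · have hL : H.lapMatrix ℝ *ᵥ (fun v => if H.Reachable v v₀ then 0 else 1) = 0 :=
      H.lapMatrix_mulVec_eq_zero_iff_forall_reachable.mpr fun i j hij => by
        have : H.Reachable i v₀ ↔ H.Reachable j v₀ := ⟨hij.symm.trans, hij.trans⟩
        simp only [this]
    simp [add_mulVec, hL, vecMulVec_mulVec]

theorem IsTree.det_lapMatrix_add_vecMulVec_single {R : Type*} [CommRing R] {H : SimpleGraph V}
    [DecidableRel H.Adj] (hT : H.IsTree) (v₀ : V) :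
    (H.lapMatrix R + vecMulVec (Pi.single v₀ 1) (Pi.single v₀ 1)).det = 1 := by
  choose! p hadj hdist using fun v (hv : v ≠ v₀) => hT.connected.exists_adj_dist_add_one_eq hv
  have hlt : ∀ v, v ≠ v₀ → H.dist (p v) v₀ < H.dist v v₀ := fun v hv => by
    have := hdist v hv; omega
  have hinj : Set.InjOn (fun v => s(v, p v)) (univ.erase v₀ : Finset V) := by
    intro x hx y hy hxy
    have hx' := hdist x (mem_erase.mp hx).1
    have hy' := hdist y (mem_erase.mp hy).1
    rcases Sym2.eq_iff.mp hxy with ⟨h, -⟩ | ⟨h1, h2⟩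
    · exact h
    · rw [h2, h1] at hx'; omega
  have hedges : (univ.erase v₀).image (fun v => s(v, p v)) = H.edgeFinset := by
    refine eq_of_subset_of_card_le (fun e he => ?_) ?_
    · obtain ⟨v, hv, rfl⟩ := mem_image.mp he
      exact mem_edgeFinset.mpr (hadj v (mem_erase.mp hv).1)
    · rw [card_image_of_injOn hinj, card_erase_of_mem (mem_univ _), card_univ,
        ← hT.card_edgeFinset, Nat.add_sub_cancel]
  set Z : Matrix V V R :=
    of fun v => if v = v₀ then Pi.single v₀ 1 else Pi.single v 1 - Pi.single (p v) 1
  have hgram : Zᵀ * Z = H.lapMatrix R + vecMulVec (Pi.single v₀ 1) (Pi.single v₀ 1) := by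
    rw [transpose_mul_eq_sum_vecMulVec, ← sum_vecMulVec_diffVec_self, ← hedges, sum_image hinj,
      ← add_sum_erase _ _ (mem_univ v₀), add_comm]
    congr 1
    · refine sum_congr rfl fun v hv => ?_
      rw [Sym2.vecMulVec_diffVec_self_mk]
      exact congrArg₂ _ (if_neg (mem_erase.mp hv).1) (if_neg (mem_erase.mp hv).1)
    · exact congrArg₂ _ (if_pos rfl) (if_pos rfl)
  rw [← hgram, det_mul, det_transpose,
    det_single_sub_single_parent_eq_one v₀ p (H.dist · v₀) hlt, mul_one]

open Classical in
theorem det_lapMatrix_add_vecMulVec_single_of_card (H : SimpleGraph V) [DecidableRel H.Adj]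
    (v₀ : V) (hcard : Nat.card H.edgeSet + 1 = Fintype.card V) :
    (H.lapMatrix ℝ + vecMulVec (Pi.single v₀ 1) (Pi.single v₀ 1)).det =
      if H.IsTree then 1 else 0 := by
  split_ifs with hT
  · exact hT.det_lapMatrix_add_vecMulVec_single v₀
  · refine det_lapMatrix_add_vecMulVec_single_of_not_connected H v₀ fun hc => hT ?_
    rw [isTree_iff_connected_and_card, Nat.card_eq_fintype_card (α := V)]
    exact ⟨hc, hcard⟩

open Classical in
theorem det_lapMatrix_add_vecMulVec_single (G : SimpleGraph V) [DecidableRel G.Adj] (v₀ : V) :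
    (G.lapMatrix ℝ + vecMulVec (Pi.single v₀ 1) (Pi.single v₀ 1)).det =
      (numSpanningTrees G : ℝ) := by
  obtain ⟨k, hk⟩ : ∃ k, Fintype.card V = k + 1 :=
    ⟨Fintype.card V - 1, by have := Fintype.card_pos_iff.mpr ⟨v₀⟩; omega⟩
  -- the index `none` stands for the root vector `e_{v₀}`, `some e` for the edge vector of `e`
  let w : Option (Sym2 V) → V → ℝ := fun a => a.elim (Pi.single v₀ 1) (Sym2.diffVec ℝ)
  have hsub : ∀ T ⊆ G.edgeFinset, ∑ a ∈ T.map .some, vecMulVec (w a) (w a) =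
      (fromEdgeSet (T : Set (Sym2 V))).lapMatrix ℝ := by
    intro T hT
    rw [sum_map, ← sum_vecMulVec_diffVec_self]
    refine sum_congr (coe_injective ?_).symm fun _ _ => rfl
    rw [coe_edgeFinset, edgeSet_fromEdgeSet_of_subset G fun e he => mem_edgeFinset.mp (hT he)]
  have hsplit : G.lapMatrix ℝ + vecMulVec (Pi.single v₀ 1) (Pi.single v₀ 1) =
      ∑ a ∈ insert none (G.edgeFinset.map .some), vecMulVec (w a) (w a) := by
    rw [sum_insert (by simp), sum_map, ← sum_vecMulVec_diffVec_self, add_comm]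
    rfl
  have hunrooted : ∀ T ∈ (G.edgeFinset.map .some).powersetCard (k + 1),
      (∑ a ∈ T, vecMulVec (w a) (w a)).det = 0 := by
    intro T hT
    refine det_sum_vecMulVec_eq_zero _ _ _ (v := fun _ => 1)
      (fun h => by simpa using congrFun h v₀) fun a ha => ?_
    obtain ⟨e, -, rfl⟩ := mem_map.mp ((mem_powersetCard.mp hT).1 ha)
    exact Sym2.diffVec_dotProduct_eq_zero fun _ _ _ => rfl
  have hrooted : ∀ T ∈ G.edgeFinset.powersetCard k,
      (∑ a ∈ insert none (T.map .some), vecMulVec (w a) (w a)).det =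
        if (fromEdgeSet (T : Set (Sym2 V))).IsTree then 1 else 0 := by
    intro T hT
    rw [mem_powersetCard] at hT
    rw [sum_insert (by simp), hsub T hT.1, add_comm]
    refine det_lapMatrix_add_vecMulVec_single_of_card _ v₀ ?_
    rw [natCard_edgeSet_fromEdgeSet_of_subset G hT.1, hT.2, hk]
  have htrees : (G.edgeFinset.powersetCard k).filter
      (fun T : Finset (Sym2 V) => (fromEdgeSet (T : Set (Sym2 V))).IsTree) =
      G.edgeFinset.powerset.filter
        fun T : Finset (Sym2 V) => (fromEdgeSet (T : Set (Sym2 V))).IsTree := by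
    ext T
    simp only [mem_filter, mem_powersetCard, mem_powerset, and_congr_left_iff,
      and_iff_left_iff_imp]
    intro htree hT
    have := (isTree_iff_connected_and_card.mp htree).2
    rw [natCard_edgeSet_fromEdgeSet_of_subset G hT, Nat.card_eq_fintype_card, hk] at this
    omega
  rw [hsplit, det_sum_vecMulVec_eq_sum_powersetCard, hk, sum_powersetCard_succ_insert (by simp),
    sum_eq_zero hunrooted, zero_add, powersetCard_map, sum_map]
  simp only [RelEmbedding.coe_toEmbedding, mapEmbedding_apply]
  rw [sum_congr rfl hrooted, sum_boole, htrees, numSpanningTrees_eq_card_filter_isTree]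

theorem adjugate_lapMatrix_apply (G : SimpleGraph V) [DecidableRel G.Adj] (hconn : G.Connected)
    (i j : V) : (G.lapMatrix ℝ).adjugate i j = numSpanningTrees G := by
  have : Nonempty V := hconn.nonempty
  have hcol : G.lapMatrix ℝ *ᵥ ((G.lapMatrix ℝ).adjugate *ᵥ Pi.single j 1) = 0 := by
    rw [mulVec_mulVec, mul_adjugate, det_lapMatrix_eq_zero, zero_smul, zero_mulVec]
  have hconst :=
    G.lapMatrix_mulVec_eq_zero_iff_forall_reachable.mp hcol i j (hconn.preconnected i j)
  rw [mulVec_single_one, col_apply, col_apply] at hconst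
  rw [hconst, ← det_lapMatrix_add_vecMulVec_single G j, det_add_vecMulVec_single,
    det_lapMatrix_eq_zero, zero_add, mulVec_single_one, col_apply]

variable (G : SimpleGraph V) [DecidableRel G.Adj]

noncomputable def iharaMatrix (u : ℝ) : Matrix V V ℝ :=
  1 - u • G.adjMatrix ℝ + u ^ 2 • (G.degMatrix ℝ - 1)

theorem iharaPoly_eq_det_iharaMatrix (u : ℝ) : iharaPoly G u = (G.iharaMatrix u).det := rfl

theorem iharaMatrix_apply (u : ℝ) (i j : V) :
    G.iharaMatrix u i j = (if i = j then 1 + u ^ 2 * (G.degree i - 1) else 0) -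
      u * (if G.Adj i j then 1 else 0) := by
  by_cases hij : i = j
  · subst hij; simp [iharaMatrix, degMatrix, one_apply]
  · simp [iharaMatrix, degMatrix, one_apply, hij, adjMatrix_apply]

theorem sum_iharaMatrix_apply (u : ℝ) (i : V) :
    ∑ j, G.iharaMatrix u i j = (1 - u) * (1 + u - u * G.degree i) := by
  simp only [iharaMatrix_apply, sum_sub_distrib, ← mul_sum, sum_ite_eq, mem_univ, if_true,
    ← degree_eq_sum_if_adj]
  ring

theorem iharaMatrix_one : G.iharaMatrix 1 = G.lapMatrix ℝ := by
  rw [iharaMatrix, lapMatrix, one_smul, one_pow, one_smul]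
  abel

theorem iharaPoly_eq_mul_det_updateCol (v₀ : V) (u : ℝ) :
    iharaPoly G u =
      (1 - u) * ((G.iharaMatrix u).updateCol v₀ fun v => 1 + u - u * G.degree v).det := by
  rw [iharaPoly_eq_det_iharaMatrix]
  exact det_eq_mul_det_updateCol_of_sum_eq _ _ _ (G.sum_iharaMatrix_apply u) v₀

theorem det_lapMatrix_updateCol_two_sub_degree (hconn : G.Connected) (v₀ : V) :
    ((G.lapMatrix ℝ).updateCol v₀ fun v => 2 - G.degree v).det =
      2 * ((Fintype.card V : ℝ) - #G.edgeFinset) * numSpanningTrees G := by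
  rw [← cramer_apply, cramer_eq_adjugate_mulVec, mulVec, dotProduct]
  simp only [adjugate_lapMatrix_apply G hconn, ← mul_sum, sum_sub_distrib, sum_const, card_univ,
    nsmul_eq_mul, ← Nat.cast_sum, sum_degrees_eq_twice_card_edges]
  push_cast
  ring

end SimpleGraph

/-- for a connected graph with `n` vertices and `m` edges,
`f_G(1) = 0` and `f_G'(1) = 2(m − n) κ(G)`. -/
theorem iharaPoly_at_one {V : Type*} [Fintype V] [DecidableEq V] (G : SimpleGraph V)
    [DecidableRel G.Adj] (hconn : G.Connected) :
    iharaPoly G 1 = 0 ∧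
      deriv (iharaPoly G) 1 =
        2 * ((G.edgeFinset.card : ℝ) - (Fintype.card V : ℝ)) * (numSpanningTrees G : ℝ) := by
  obtain ⟨v₀⟩ := hconn.nonempty
  set g : ℝ → ℝ := fun u => ((G.iharaMatrix u).updateCol v₀ fun v => 1 + u - u * G.degree v).det
  have hf : iharaPoly G = fun u => (1 - u) * g u :=
    funext (G.iharaPoly_eq_mul_det_updateCol v₀)
  have hg : DifferentiableAt ℝ g 1 := by
    refine differentiableAt_det fun i j => ?_
    by_cases hj : j = v₀
    · simp only [hj, updateCol_self]; fun_prop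
    · simp only [updateCol_ne hj, SimpleGraph.iharaMatrix, Matrix.sub_apply, Matrix.add_apply,
        Matrix.smul_apply, smul_eq_mul]
      fun_prop
  have hg1 : g 1 = 2 * ((Fintype.card V : ℝ) - #G.edgeFinset) * numSpanningTrees G := by
    rw [← G.det_lapMatrix_updateCol_two_sub_degree hconn v₀, ← G.iharaMatrix_one]
    congr! 3
    ring
  have hlin : HasDerivAt (fun u : ℝ => 1 - u) (-1) 1 := by
    simpa using (hasDerivAt_id (1 : ℝ)).const_sub 1
  refine ⟨by simp [hf], ?_⟩
  rw [hf, (hlin.fun_mul hg.hasDerivAt).deriv, hg1]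
  ring
end

section
/- Let G be a simple connected k-regular graph with k ≥ 3 and let λ be a real eigenvalue of the adjacency matrix with |λ| ≤ 2√(k−1) and λ ≠ ±k. Then the corresponding poles u = (λ² − 2k + 4 ± iλ√(4k − 4 − λ²)) / (2(λ² + (k−2)²)) of the modified zeta function, written u = p + qi, satisfy (p + 1/(k² − 2k))² + q² = ((k−1)/(k² − 2k))². -/
/-!
Write `m = k² − 2k` and `D = λ² + (k − 2)²`. The pole `u = p + qi` is a root of
`D u² − (λ² − 2k + 4) u + 1`, whose discriminant is `−λ²(4k − 4 − λ²) ≤ 0` by the Ramanujan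
bound; hence `|u|² = 1/D` and `2p = (λ² − 2k + 4)/D = 1 − m/D`, i.e. `m |u|² + 2p = 1`.
Completing the square, `|u + 1/m|² = 1/m + 1/m² = (k − 1)²/m²`.
-/

theorem sq_le_four_mul_of_abs_le_two_mul_sqrt {x a : ℝ} (ha : 0 ≤ a) (h : |x| ≤ 2 * √a) :
    x ^ 2 ≤ 4 * a :=
  calc x ^ 2 ≤ (2 * √a) ^ 2 := sq_le_sq.2 (h.trans (le_abs_self _))
    _ = 4 * a := by rw [mul_pow, Real.sq_sqrt ha]; norm_num

theorem add_one_div_sq_add_sq_eq_of_mul_add_two_mul_eq_one {m p q r : ℝ} (hm : m ≠ 0)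
    (h : m * (p ^ 2 + q ^ 2) + 2 * p = 1) (hr : r ^ 2 = m + 1) :
    (p + 1 / m) ^ 2 + q ^ 2 = (r / m) ^ 2 := by
  field_simp
  linear_combination m * h - hr

theorem mul_normSq_add_two_mul_re_eq_one_of_pole {k lam q : ℝ} (hk : k ≠ 2)
    (hq : q ^ 2 = lam ^ 2 * (4 * k - 4 - lam ^ 2)) :
    (k ^ 2 - 2 * k) * (((lam ^ 2 - 2 * k + 4) / (2 * (lam ^ 2 + (k - 2) ^ 2))) ^ 2 +
        (q / (2 * (lam ^ 2 + (k - 2) ^ 2))) ^ 2) +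
      2 * ((lam ^ 2 - 2 * k + 4) / (2 * (lam ^ 2 + (k - 2) ^ 2))) = 1 := by
  have hD : lam ^ 2 + (k - 2) ^ 2 ≠ 0 :=
    (add_pos_of_nonneg_of_pos (sq_nonneg lam) (sq_pos_iff.2 (sub_ne_zero.2 hk))).ne'
  field_simp
  linear_combination (k ^ 2 - 2 * k) * hq

theorem poles_on_circle_general (k : ℕ) (hk : 3 ≤ k) (lam : ℝ)
    (hram : |lam| ≤ 2 * Real.sqrt (k - 1)) (s : ℝ) (hs : s = 1 ∨ s = -1) :
    ((lam ^ 2 - 2 * k + 4) / (2 * (lam ^ 2 + ((k : ℝ) - 2) ^ 2)) +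
          1 / ((k : ℝ) ^ 2 - 2 * k)) ^ 2 +
        (s * lam * Real.sqrt (4 * k - 4 - lam ^ 2) /
          (2 * (lam ^ 2 + ((k : ℝ) - 2) ^ 2))) ^ 2 =
      (((k : ℝ) - 1) / ((k : ℝ) ^ 2 - 2 * k)) ^ 2 := by
  have hk3 : (3 : ℝ) ≤ k := by exact_mod_cast hk
  have hdisc : 0 ≤ 4 * (k : ℝ) - 4 - lam ^ 2 := by
    have := sq_le_four_mul_of_abs_le_two_mul_sqrt (by linarith) hram
    linarith
  have hq : (s * lam * Real.sqrt (4 * k - 4 - lam ^ 2)) ^ 2 =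
      lam ^ 2 * (4 * k - 4 - lam ^ 2) := by
    have hs2 : s ^ 2 = 1 := by rcases hs with rfl | rfl <;> norm_num
    rw [mul_pow, mul_pow, hs2, Real.sq_sqrt hdisc, one_mul]
  exact add_one_div_sq_add_sq_eq_of_mul_add_two_mul_eq_one (by nlinarith)
    (mul_normSq_add_two_mul_re_eq_one_of_pole (by linarith) hq) (by ring)

/-- for a simple connected `k`-regular graph (`k ≥ 3`) and a nontrivial real
adjacency eigenvalue `λ` with `|λ| ≤ 2√(k−1)`, the corresponding poles
`u = p + qi = (λ² − 2k + 4 ± iλ√(4k − 4 − λ²)) / (2(λ² + (k−2)²))` of the modified zeta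
function lie on the circle `(p + 1/(k² − 2k))² + q² = ((k−1)/(k² − 2k))²`. -/
theorem poles_on_circle {V : Type*} [Fintype V] [DecidableEq V] (G : SimpleGraph V)
    [DecidableRel G.Adj] (hconn : G.Connected) (k : ℕ) (hk : 3 ≤ k)
    (hreg : G.IsRegularOfDegree k) (lam : ℝ) (hlam : lam ∈ spectrum ℝ (G.adjMatrix ℝ))
    (hram : |lam| ≤ 2 * Real.sqrt (k - 1)) (hk1 : lam ≠ k) (hk2 : lam ≠ -(k : ℝ))
    (s : ℝ) (hs : s = 1 ∨ s = -1) :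
    ((lam ^ 2 - 2 * k + 4) / (2 * (lam ^ 2 + ((k : ℝ) - 2) ^ 2)) +
          1 / ((k : ℝ) ^ 2 - 2 * k)) ^ 2 +
        (s * lam * Real.sqrt (4 * k - 4 - lam ^ 2) /
          (2 * (lam ^ 2 + ((k : ℝ) - 2) ^ 2))) ^ 2 =
      (((k : ℝ) - 1) / ((k : ℝ) ^ 2 - 2 * k)) ^ 2 :=
  poles_on_circle_general k hk lam hram s hs
end

section
/- Let G be a finite connected non-bipartite graph with minimum degree at least 3. Then the matrix (U²)⁺ (the 0-1 matrix with (e,f)-entry 1 iff (f,e) is a 2-step-arc or a 2-step-identity) is irreducible: for any two oriented edges e, f of G there exists a positive integer r with (((U²)⁺)^r)_{e,f} > 0. -/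
/-!
An even non-backtracking walk of length `2r` from the dart `f` to the dart `e` makes the
`(e, f)`-entry of `(U²)⁺ ^ r` positive. With minimum degree at least 3 every dart reaches its
reversal by a non-backtracking walk, so in a connected graph every dart reaches every other one.
If `f` reached `e` only by odd walks, the parity of walks from `f` would be well defined and
would induce a proper 2-colouring of the graph.
-/

open Matrix

open scoped Classical in
/-- The `0`-`1` matrix `(U²)⁺` on oriented edges, with `(e,f)`-entry `1` iff `(f,e)` is a
2-step-arc (there is an oriented edge `g` with `g ≠ f⁻¹`, `g ≠ e⁻¹`, `o(g) = t(f)` and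
`t(g) = o(e)`) or a 2-step-identity (`f = e`). -/
noncomputable def twoStepMatrix {V : Type*} (G : SimpleGraph V) :
    Matrix G.Dart G.Dart ℝ := fun e f =>
  if (∃ g : G.Dart, g ≠ f.symm ∧ g ≠ e.symm ∧ g.toProd.1 = f.toProd.2 ∧
        g.toProd.2 = e.toProd.1) ∨ f = e then 1 else 0

open Relation

namespace Relation

variable {α : Type*} {r : α → α → Prop}

variable (r) in
def NSteps : ℕ → α → α → Prop
  | 0, a, b => a = b
  | n + 1, a, b => ∃ c, r a c ∧ NSteps n c b

theorem NSteps.add {m n : ℕ} {a b c : α} (hab : NSteps r m a b) (hbc : NSteps r n b c) :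
    NSteps r (m + n) a c := by
  induction m generalizing a with
  | zero => cases hab; simpa using hbc
  | succ m ih =>
    obtain ⟨d, had, hdb⟩ := hab
    rw [Nat.add_right_comm]
    exact ⟨d, had, ih hdb⟩

theorem NSteps.tail {n : ℕ} {a b c : α} (hab : NSteps r n a b) (hbc : r b c) :
    NSteps r (n + 1) a c :=
  hab.add ⟨c, hbc, rfl⟩

theorem ReflTransGen.exists_nSteps {a b : α} (h : ReflTransGen r a b) : ∃ n, NSteps r n a b := by
  induction h with
  | refl => exact ⟨0, rfl⟩
  | tail _ hbc ih =>
    obtain ⟨n, hn⟩ := ih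
    exact ⟨n + 1, hn.tail hbc⟩

/-- Otherwise two chains from `a` to some `x` of different parities, continued by one chain from
`x` to `b`, would give an even chain from `a` to `b`; so `φ` is the parity of any chain from `a`. -/
theorem exists_nSteps_even_or_exists_parity (hr : ∀ a b, ReflTransGen r a b) (a b : α) :
    (∃ n, NSteps r (2 * n) a b) ∨ ∃ φ : α → ZMod 2, ∀ x y, r x y → φ y = φ x + 1 := by
  by_cases heven : ∃ n, NSteps r (2 * n) a b
  · exact .inl heven
  have hodd : ∀ {n}, NSteps r n a b → n % 2 = 1 := fun {n} h => by
    by_contra hn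
    exact heven ⟨n / 2, by rwa [Nat.two_mul_div_two_of_even (Nat.even_iff.mpr (by omega))]⟩
  have hparity : ∀ {x m n}, NSteps r m a x → NSteps r n a x → (m : ZMod 2) = n := by
    intro x m n hm hn
    obtain ⟨k, hk⟩ := (hr x b).exists_nSteps
    have hmk := hodd (hm.add hk)
    have hnk := hodd (hn.add hk)
    rw [ZMod.natCast_eq_natCast_iff']
    omega
  choose len hlen using fun x => (hr a x).exists_nSteps
  refine .inr ⟨fun x => len x, fun x y hxy => ?_⟩
  simpa using hparity (hlen y) ((hlen x).tail hxy)

end Relation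

namespace SimpleGraph

variable {V : Type*} {G : SimpleGraph V}

def NonBacktrackingStep (a b : G.Dart) : Prop := b.fst = a.snd ∧ b ≠ a.symm

theorem NonBacktrackingStep.symm {a b : G.Dart} (h : NonBacktrackingStep a b) :
    NonBacktrackingStep b.symm a.symm :=
  ⟨by simp [h.1], fun hba => h.2 (by simpa using hba.symm)⟩

theorem reflTransGen_nonBacktrackingStep_symm {a b : G.Dart}
    (h : ReflTransGen NonBacktrackingStep a b) :
    ReflTransGen NonBacktrackingStep b.symm a.symm :=
  ReflTransGen.lift Dart.symm (fun _ _ h => h.symm) _ _ (reflTransGen_swap.mpr h)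

section Finite

variable [Fintype V] [DecidableRel G.Adj]

theorem exists_adj_ne_ne_of_three_le_minDegree (hdeg : 3 ≤ G.minDegree) (v w₁ w₂ : V) :
    ∃ u, G.Adj v u ∧ u ≠ w₁ ∧ u ≠ w₂ := by
  classical
  have hcard : 3 ≤ (G.neighborFinset v).card := hdeg.trans (G.card_neighborFinset_eq_degree v ▸
    G.minDegree_le_degree v)
  obtain ⟨u, hu⟩ : (((G.neighborFinset v).erase w₁).erase w₂).Nonempty := by
    rw [← Finset.card_pos]
    have h₁ := Finset.pred_card_le_card_erase (a := w₁) (s := G.neighborFinset v)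
    have h₂ := Finset.pred_card_le_card_erase (a := w₂) (s := (G.neighborFinset v).erase w₁)
    omega
  simp only [Finset.mem_erase, mem_neighborFinset] at hu
  exact ⟨u, hu.2.2, hu.2.1, hu.1⟩

/-- The darts reachable from `a` would form a finite set in which every dart has at least two
successors but, as no vertex can be entered twice without turning back, at most one predecessor. -/
theorem reflTransGen_nonBacktrackingStep_self_symm (hdeg : 3 ≤ G.minDegree) (a : G.Dart) :
    ReflTransGen NonBacktrackingStep a a.symm := by
  classical
  by_contra hna
  set R := Finset.univ.filter (ReflTransGen NonBacktrackingStep a)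
  have hR : ∀ {x}, x ∈ R ↔ ReflTransGen NonBacktrackingStep a x := by simp [R]
  have hsnd : ∀ x ∈ R, ∀ y ∈ R, x.snd = y.snd → x = y := by
    intro x hx y hy hxy
    by_contra hne
    have hy' : ReflTransGen NonBacktrackingStep a y.symm :=
      (hR.mp hx).tail ⟨by simp [hxy], fun h => hne (Dart.symm_involutive.injective h).symm⟩
    exact hna ((hR.mp hy).trans (by simpa using reflTransGen_nonBacktrackingStep_symm hy'))
  have hsucc : ∀ x ∈ R, 2 ≤ (R.bipartiteAbove NonBacktrackingStep x).card := by
    intro x hx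
    obtain ⟨u₁, hu₁, hu₁x, -⟩ := exists_adj_ne_ne_of_three_le_minDegree hdeg x.snd x.fst x.fst
    obtain ⟨u₂, hu₂, hu₂x, hu₂₁⟩ := exists_adj_ne_ne_of_three_le_minDegree hdeg x.snd x.fst u₁
    have hstep : ∀ {u} (hu : G.Adj x.snd u), u ≠ x.fst →
        (⟨(x.snd, u), hu⟩ : G.Dart) ∈ R.bipartiteAbove NonBacktrackingStep x := by
      intro u hu hux
      have hs : NonBacktrackingStep x ⟨(x.snd, u), hu⟩ :=
        ⟨rfl, fun h => hux (congrArg (·.snd) h)⟩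
      exact Finset.mem_filter.mpr ⟨hR.mpr ((hR.mp hx).tail hs), hs⟩
    exact Finset.one_lt_card.mpr ⟨_, hstep hu₁ hu₁x, _, hstep hu₂ hu₂x,
      fun h => hu₂₁ (congrArg (·.snd) h).symm⟩
  have hpred : ∀ y ∈ R, (R.bipartiteBelow NonBacktrackingStep y).card ≤ 1 := by
    refine fun y _ => Finset.card_le_one.mpr fun x₁ hx₁ x₂ hx₂ => ?_
    simp only [Finset.mem_bipartiteBelow] at hx₁ hx₂
    exact hsnd x₁ hx₁.1 x₂ hx₂.1 (hx₁.2.1.symm.trans hx₂.2.1)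
  have hcount := Finset.card_mul_le_card_mul _ hsucc hpred
  have hpos : 0 < R.card := Finset.card_pos.mpr ⟨a, hR.mpr .refl⟩
  omega

theorem reflTransGen_nonBacktrackingStep_of_fst_eq_snd (hdeg : 3 ≤ G.minDegree) {a b : G.Dart}
    (h : b.fst = a.snd) : ReflTransGen NonBacktrackingStep a b := by
  by_cases hb : b = a.symm
  · exact hb ▸ reflTransGen_nonBacktrackingStep_self_symm hdeg a
  · exact .single ⟨h, hb⟩

theorem Connected.reflTransGen_nonBacktrackingStep (hconn : G.Connected)
    (hdeg : 3 ≤ G.minDegree) (a b : G.Dart) : ReflTransGen NonBacktrackingStep a b := by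
  have hvert : ∀ v, ∃ c : G.Dart, ReflTransGen NonBacktrackingStep a c ∧ c.snd = v := by
    intro v
    induction (reachable_iff_reflTransGen _ _).mp (hconn.preconnected a.snd v) with
    | refl => exact ⟨a, .refl, rfl⟩
    | @tail u w _ huw ih =>
      obtain ⟨c, hc, rfl⟩ := ih
      exact ⟨⟨(c.snd, w), huw⟩,
        hc.trans (reflTransGen_nonBacktrackingStep_of_fst_eq_snd hdeg rfl), rfl⟩
  obtain ⟨c, hc, hcb⟩ := hvert b.fst
  exact hc.trans (reflTransGen_nonBacktrackingStep_of_fst_eq_snd hdeg hcb.symm)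

/-- All darts entering a vertex get the same parity, since each of two of them is followed by
the reversal of a third one; this parity is a proper colouring. -/
theorem colorable_two_of_nonBacktrackingStep_parity (hdeg : 3 ≤ G.minDegree)
    (φ : G.Dart → ZMod 2) (hφ : ∀ x y, NonBacktrackingStep x y → φ y = φ x + 1) :
    G.Colorable 2 := by
  have hthird : ∀ x y : G.Dart, ∃ z : G.Dart, z.snd = x.snd ∧ z ≠ x ∧ z ≠ y := by
    intro x y
    obtain ⟨u, hu, hux, huy⟩ := exists_adj_ne_ne_of_three_le_minDegree hdeg x.snd x.fst y.fst
    exact ⟨⟨(u, x.snd), hu.symm⟩, rfl, fun h => hux (congrArg (·.fst) h),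
      fun h => huy (congrArg (·.fst) h)⟩
  have hstep : ∀ {x z : G.Dart}, z.snd = x.snd → z ≠ x → NonBacktrackingStep x z.symm :=
    fun hzx hne => ⟨by simp [hzx], fun h => hne (Dart.symm_involutive.injective h)⟩
  have hconst : ∀ x y : G.Dart, x.snd = y.snd → φ x = φ y := by
    intro x y hxy
    obtain ⟨z, hzx, hz₁, hz₂⟩ := hthird x y
    have hx := hφ _ _ (hstep hzx hz₁)
    have hy := hφ _ _ (hstep (hzx.trans hxy) hz₂)
    exact add_right_cancel (hx.symm.trans hy)
  choose into hinto using fun v => exists_adj_ne_ne_of_three_le_minDegree hdeg v v v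
  set col : V → ZMod 2 := fun v => φ ⟨(into v, v), (hinto v).1.symm⟩
  have hcol : ∀ x : G.Dart, φ x = col x.snd := fun x => hconst _ _ rfl
  refine ZMod.card 2 ▸ (Coloring.mk col fun {u v} huv hc => ?_).colorable
  let d : G.Dart := ⟨(u, v), huv⟩
  obtain ⟨x, hxu, hxd, -⟩ := hthird d.symm d.symm
  have hd := hφ x d ⟨hxu.symm, fun h => hxd (by simp [h])⟩
  rw [hcol, hcol x, show x.snd = u from hxu, ← hc] at hd
  simp at hd

end Finite

end SimpleGraph

open SimpleGraph

theorem twoStepMatrix_nonneg {V : Type*} (G : SimpleGraph V) (e f : G.Dart) :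
    0 ≤ twoStepMatrix G e f := by
  unfold twoStepMatrix
  split_ifs <;> norm_num

theorem twoStepMatrix_self {V : Type*} (G : SimpleGraph V) (e : G.Dart) :
    twoStepMatrix G e e = 1 :=
  if_pos (.inr rfl)

theorem twoStepMatrix_of_nonBacktrackingStep {V : Type*} {G : SimpleGraph V} {e f g : G.Dart}
    (hfg : NonBacktrackingStep f g) (hge : NonBacktrackingStep g e) : twoStepMatrix G e f = 1 :=
  if_pos (.inl ⟨g, hfg.2, fun h => hge.2 (by simp [h]), hfg.1, hge.1.symm⟩)

theorem Matrix.pow_succ_apply_pos {n R : Type*} [Fintype n] [DecidableEq n] [Semiring R]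
    [PartialOrder R] [IsStrictOrderedRing R] {A : Matrix n n R}
    (hA : ∀ i j, 0 ≤ A i j) {m : ℕ} {i j k : n} (hik : 0 < (A ^ m) i k) (hkj : 0 < A k j) :
    0 < (A ^ (m + 1)) i j := by
  rw [pow_succ, Matrix.mul_apply]
  exact Finset.sum_pos' (fun l _ => mul_nonneg (Matrix.pow_apply_nonneg hA m i l) (hA l j))
    ⟨k, Finset.mem_univ k, mul_pos hik hkj⟩

theorem twoStepMatrix_pow_pos_of_nSteps {V : Type*} [Fintype V] [DecidableEq V]
    {G : SimpleGraph V} [DecidableRel G.Adj] {r : ℕ} {e f : G.Dart}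
    (h : NSteps NonBacktrackingStep (2 * r) f e) : 0 < (twoStepMatrix G ^ r) e f := by
  induction r generalizing f with
  | zero => cases h; simp
  | succ r ih =>
    obtain ⟨g, hfg, k, hgk, hke⟩ := h
    refine Matrix.pow_succ_apply_pos (twoStepMatrix_nonneg G) (ih hke) ?_
    rw [twoStepMatrix_of_nonBacktrackingStep hfg hgk]
    exact one_pos

/-- for a finite connected non-bipartite graph with minimum degree at least
3, the matrix `(U²)⁺` is irreducible: for any oriented edges `e, f` there is `r ≥ 1` with
`(((U²)⁺)^r)_{e,f} > 0`. -/
theorem twoStepMatrix_irreducible {V : Type*} [Fintype V] [DecidableEq V]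
    (G : SimpleGraph V) [DecidableRel G.Adj] (hconn : G.Connected)
    (hnonbip : ¬ G.Colorable 2) (hdeg : 3 ≤ G.minDegree) (e f : G.Dart) :
    ∃ r : ℕ, 0 < r ∧ 0 < ((twoStepMatrix G) ^ r) e f := by
  obtain ⟨r, hr⟩ := (exists_nSteps_even_or_exists_parity
    (hconn.reflTransGen_nonBacktrackingStep hdeg) f e).resolve_right
    fun ⟨φ, hφ⟩ => hnonbip (colorable_two_of_nonBacktrackingStep_parity hdeg φ hφ)
  refine ⟨r + 1, r.succ_pos, Matrix.pow_succ_apply_pos (twoStepMatrix_nonneg G)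
    (twoStepMatrix_pow_pos_of_nSteps hr) ?_⟩
  rw [twoStepMatrix_self]
  exact one_pos
end
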